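/- arXiv:2507.23724 — 2 statements merged into one kernel-verified Lean document; each statement's English description precedes it below -/
import Mathlib

section
/- With v^j_0 as defined (affine exit probabilities on a star graph), and with c := (Σ_{i∈E} β_i/u_i)^{−1} · min_{i∈E}(β_i/u_i), the ratio bound holds: for every e, e' ∈ E, x ∈ [0, u_{e'}), and y ∈ [0, u_e], v^j_0(e, y)/v^j_0(e', x) ≤ u_{e'}/(c·(u_{e'} − x)). -/
noncomputable def v0 {E : Type*} [Fintype E] [DecidableEq E]
    (u β : E → ℝ) (j e : E) (x : ℝ) : ℝ :=
  ((u e - x) / u e) * (∑ i, β i / u i)⁻¹ * (β j / u j)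
    + (if j = e then x / u e else 0)

theorem stmt_11 {E : Type*} [Fintype E] [DecidableEq E] [Nonempty E]
    (u β : E → ℝ) (hu : ∀ e, 0 < u e) (hβ : ∀ e, 0 < β e)
    (hsum : ∑ e, β e = 1) (j : E)
    (c : ℝ)
    (hc : c = (∑ i, β i / u i)⁻¹ * (Finset.univ.inf' Finset.univ_nonempty (fun i => β i / u i))) :
    ∀ e e' : E, ∀ x ∈ Set.Ico (0 : ℝ) (u e'), ∀ y ∈ Set.Icc (0 : ℝ) (u e),
      v0 u β j e y / v0 u β j e' x ≤ u e' / (c * (u e' - x)) := by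
  intro e e' x hx y hy
  obtain ⟨hx0, hxu⟩ := hx
  obtain ⟨hy0, hyu⟩ := hy
  set S : ℝ := ∑ i, β i / u i with hS
  have hSpos : 0 < S := Finset.sum_pos (fun i _ => div_pos (hβ i) (hu i)) ⟨Classical.arbitrary E, Finset.mem_univ _⟩
  set m : ℝ := Finset.univ.inf' Finset.univ_nonempty (fun i => β i / u i) with hm
  have hmle : m ≤ β j / u j := Finset.inf'_le _ (Finset.mem_univ j)
  have hmpos : 0 < m := by
    obtain ⟨i, _, hi⟩ := Finset.exists_mem_eq_inf' (Finset.univ_nonempty) (fun i => β i / u i)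
    rw [hm, hi]; exact div_pos (hβ i) (hu i)
  have hjS : β j / u j ≤ S :=
    Finset.single_le_sum (fun i _ => le_of_lt (div_pos (hβ i) (hu i))) (Finset.mem_univ j)
  have hcpos : 0 < c := by rw [hc]; exact mul_pos (inv_pos.mpr hSpos) hmpos
  have hcle : c ≤ S⁻¹ * (β j / u j) := by
    rw [hc]; exact mul_le_mul_of_nonneg_left hmle (le_of_lt (inv_pos.mpr hSpos))
  have htle1 : S⁻¹ * (β j / u j) ≤ 1 := by
    rw [inv_mul_le_iff₀ hSpos]; linarith
  -- numerator ≤ 1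
  have hnum : v0 u β j e y ≤ 1 := by
    unfold v0
    rw [← hS]
    have h1 : ((u e - y) / u e) * S⁻¹ * (β j / u j) ≤ (u e - y) / u e := by
      rw [mul_assoc]
      calc ((u e - y) / u e) * (S⁻¹ * (β j / u j)) ≤ ((u e - y) / u e) * 1 :=
            mul_le_mul_of_nonneg_left htle1 (div_nonneg (by linarith) (le_of_lt (hu e)))
        _ = (u e - y) / u e := mul_one _
    by_cases hje : j = e
    · rw [if_pos hje]
      have : (u e - y) / u e + y / u e = 1 := by
        rw [← add_div, sub_add_cancel, div_self (hu e).ne']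
      linarith
    · rw [if_neg hje, add_zero]
      have : (u e - y) / u e ≤ 1 := by
        rw [div_le_one (hu e)]; linarith
      linarith
  -- denominator ≥ c * (u e' - x) / u e'
  have hden : c * (u e' - x) / u e' ≤ v0 u β j e' x := by
    unfold v0
    rw [← hS]
    have h2 : c * (u e' - x) / u e' ≤ ((u e' - x) / u e') * S⁻¹ * (β j / u j) := by
      rw [mul_assoc]
      have : c * (u e' - x) / u e' = ((u e' - x) / u e') * c := by ring
      rw [this]
      exact mul_le_mul_of_nonneg_left hcle (div_nonneg (by linarith) (le_of_lt (hu e')))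
    have h3 : (0:ℝ) ≤ (if j = e' then x / u e' else 0) := by
      split
      · exact div_nonneg hx0 (le_of_lt (hu e'))
      · exact le_refl 0
    linarith
  have hdenpos : 0 < c * (u e' - x) / u e' :=
    div_pos (mul_pos hcpos (by linarith)) (hu e')
  calc v0 u β j e y / v0 u β j e' x ≤ 1 / (c * (u e' - x) / u e') :=
        div_le_div₀ zero_le_one hnum hdenpos hden
    _ = u e' / (c * (u e' - x)) := one_div_div _ _
end

section
/- Consequence of the ratio bound: for all e ∈ E, x, y ∈ [0, u_e), the quantity (u_e − max(x,y))·v^j_0(e,y)/v^j_0(e,x) is bounded above by u_e/c, where c = (Σ_i β_i/u_i)^{−1}·min_i(β_i/u_i). -/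
theorem stmt_12 {E : Type*} [Fintype E] [DecidableEq E] [Nonempty E]
    (u β : E → ℝ) (hu : ∀ e, 0 < u e) (hβ : ∀ e, 0 < β e)
    (hsum : ∑ e, β e = 1) (j : E)
    (c : ℝ)
    (hc : c = (∑ i, β i / u i)⁻¹ * (Finset.univ.inf' Finset.univ_nonempty (fun i => β i / u i))) :
    ∀ e : E, ∀ x ∈ Set.Ico (0 : ℝ) (u e), ∀ y ∈ Set.Ico (0 : ℝ) (u e),
      (u e - max x y) * v0 u β j e y / v0 u β j e x ≤ u e / c := by
  intro e x hx y hy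
  obtain ⟨hx0, hxu⟩ := hx
  obtain ⟨hy0, hyu⟩ := hy
  have hue := hu e
  have hS : 0 < ∑ i, β i / u i :=
    Finset.sum_pos (fun i _ => div_pos (hβ i) (hu i)) Finset.univ_nonempty
  set S := ∑ i, β i / u i with hSdef
  set m := Finset.univ.inf' Finset.univ_nonempty (fun i => β i / u i) with hmdef
  have hmle : ∀ i, m ≤ β i / u i := fun i => Finset.inf'_le _ (Finset.mem_univ i)
  have hm : 0 < m := by
    rw [hmdef, Finset.lt_inf'_iff]
    exact fun i _ => div_pos (hβ i) (hu i)
  have hterm : ∀ i, β i / u i ≤ S := fun i =>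
    Finset.single_le_sum (f := fun i => β i / u i)
      (fun i _ => (div_pos (hβ i) (hu i)).le) (Finset.mem_univ i)
  have hmS : m ≤ S := (hmle (Classical.arbitrary E)).trans (hterm _)
  have hSinv : 0 < S⁻¹ := inv_pos.mpr hS
  have hcpos : 0 < c := by rw [hc]; exact mul_pos hSinv hm
  have hc1 : c ≤ 1 := by
    rw [hc]
    calc S⁻¹ * m ≤ S⁻¹ * S := mul_le_mul_of_nonneg_left hmS hSinv.le
      _ = 1 := inv_mul_cancel₀ hS.ne'
  have hM : max x y < u e := max_lt hxu hyu
  have hM0 : 0 ≤ max x y := le_max_of_le_left hx0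
  by_cases hje : j = e
  · -- j = e
    subst hje
    have hcj : c ≤ S⁻¹ * (β j / u j) := by
      rw [hc]; exact mul_le_mul_of_nonneg_left (hmle j) hSinv.le
    have hjle : S⁻¹ * (β j / u j) ≤ 1 := by
      calc S⁻¹ * (β j / u j) ≤ S⁻¹ * S := mul_le_mul_of_nonneg_left (hterm j) hSinv.le
        _ = 1 := inv_mul_cancel₀ hS.ne'
    have hv : ∀ t : ℝ, v0 u β j j t = (u j - t) / u j * (S⁻¹ * (β j / u j)) + t / u j := by
      intro t
      simp [v0, mul_assoc]
      exact Or.inl (Or.inl hSdef.symm)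
    have hvx : c ≤ v0 u β j j x := by
      rw [hv]
      have h1 : (u j - x) / u j * c ≤ (u j - x) / u j * (S⁻¹ * (β j / u j)) :=
        mul_le_mul_of_nonneg_left hcj (div_nonneg (by linarith) hue.le)
      have h2 : x / u j * c ≤ x / u j := by
        nlinarith [div_nonneg hx0 hue.le]
      have h3 : (u j - x) / u j * c + x / u j * c = c := by
        field_simp
        ring
      linarith
    have hvy : v0 u β j j y ≤ 1 := by
      rw [hv]
      have h1 : (u j - y) / u j * (S⁻¹ * (β j / u j)) ≤ (u j - y) / u j :=
        by nlinarith [div_nonneg (by linarith : (0:ℝ) ≤ u j - y) hue.le]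
      have h2 : (u j - y) / u j + y / u j = 1 := by field_simp; ring
      linarith
    have hvy0 : 0 ≤ v0 u β j j y := le_trans hcpos.le (by
      rw [hv]
      have h1 : (u j - y) / u j * c ≤ (u j - y) / u j * (S⁻¹ * (β j / u j)) :=
        mul_le_mul_of_nonneg_left hcj (div_nonneg (by linarith) hue.le)
      have h2 : y / u j * c ≤ y / u j := by
        nlinarith [div_nonneg hy0 hue.le]
      have h3 : (u j - y) / u j * c + y / u j * c = c := by
        field_simp
        ring
      linarith)
    rw [div_le_div_iff₀ (lt_of_lt_of_le hcpos hvx) hcpos]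
    have hA : (u j - max x y) * v0 u β j j y ≤ u j := by
      nlinarith [hue, hM0, hM, hvy, hvy0]
    nlinarith [hvx, hcpos, hue]
  · -- j ≠ e
    have hv : ∀ t : ℝ, v0 u β j e t = (u e - t) / u e * (S⁻¹ * (β j / u j)) := by
      intro t
      simp [v0, hje, mul_assoc]
      exact Or.inl (Or.inl hSdef.symm)
    have hK : 0 < S⁻¹ * (β j / u j) := mul_pos hSinv (div_pos (hβ j) (hu j))
    set K := S⁻¹ * (β j / u j) with hKdef
    have hvx : 0 < v0 u β j e x := by
      rw [hv]; exact mul_pos (div_pos (by linarith) hue) hK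
    rw [div_le_div_iff₀ hvx hcpos]
    rw [hv, hv]
    have hrhs : u e * ((u e - x) / u e * K) = (u e - x) * K := by
      field_simp
    rw [hrhs]
    have hd : (u e - y) / u e ≤ 1 := by
      rw [div_le_one hue]; linarith
    have hd0 : 0 ≤ (u e - y) / u e := div_nonneg (by linarith) hue.le
    have hab : u e - max x y ≤ u e - x := by
      have := le_max_left x y; linarith
    have ha0 : 0 ≤ u e - max x y := by linarith
    calc (u e - max x y) * ((u e - y) / u e * K) * c
        ≤ (u e - max x y) * ((u e - y) / u e * K) * 1 :=
          mul_le_mul_of_nonneg_left hc1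
            (mul_nonneg ha0 (mul_nonneg hd0 hK.le))
      _ = (u e - max x y) * ((u e - y) / u e * K) := by ring
      _ ≤ (u e - x) * ((u e - y) / u e * K) :=
          mul_le_mul_of_nonneg_right hab (mul_nonneg hd0 hK.le)
      _ ≤ (u e - x) * (1 * K) :=
          mul_le_mul_of_nonneg_left (mul_le_mul_of_nonneg_right hd hK.le) (by linarith)
      _ = (u e - x) * K := by ring
end
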